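/- arXiv:1801.08047 — 3 statements merged into one kernel-verified Lean document; each statement's English description precedes it below -/
import Mathlib

section
/- Let X be a δ-hyperbolic graph (geodesic triangles are δ-thin) and let a, b, c be vertices. If the angle at c between a and b is greater than 12δ (meaning: there exist edges e1, e2 at c lying on geodesics from c to a and from c to b respectively, with angle at c between e1 and e2 greater than 12δ), then every geodesic from a to b passes through c. -/
/-- A graph: vertices, oriented edges, origin/terminus maps, and a
fixed-point-free edge-reversing involution. -/
structure MGraph where
  V : Type
  E : Type
  o : E → V
  t : E → V
  rev : E → E
  rev_o : ∀ e, o (rev e) = t e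
  rev_t : ∀ e, t (rev e) = o e
  rev_rev : ∀ e, rev (rev e) = e
  rev_ne : ∀ e, rev e ≠ e

namespace MGraph

variable (X : MGraph)

/-- A walk from `x` to `y` given by a list of consecutive edges. -/
def IsWalk : List X.E → X.V → X.V → Prop
  | [], x, y => x = y
  | e :: es, x, y => X.o e = x ∧ IsWalk es (X.t e) y

/-- The vertices visited by a walk starting at `x`. -/
def walkVerts : X.V → List X.E → List X.V
  | x, [] => [x]
  | x, e :: es => x :: walkVerts (X.t e) es

/-- The graph metric (length of each edge is 1), valued in `ℕ∞`. -/
noncomputable def dist (x y : X.V) : ℕ∞ :=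
  sInf {n : ℕ∞ | ∃ es, X.IsWalk es x y ∧ (es.length : ℕ∞) = n}

/-- The distance from `x` to `y` in the graph with the vertex `v` removed. -/
noncomputable def delDist (v x y : X.V) : ℕ∞ :=
  sInf {n : ℕ∞ | ∃ es, X.IsWalk es x y ∧ v ∉ X.walkVerts x es ∧ (es.length : ℕ∞) = n}

/-- The angle at `v = t e1 = o e2` between two edges `e1, e2`: the distance
from `o e1` to `t e2` in the graph with the vertex `t e1` removed. -/
noncomputable def angle (e1 e2 : X.E) : ℕ∞ :=
  X.delDist (X.t e1) (X.o e1) (X.t e2)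

/-- A geodesic is a walk whose length realizes the distance. -/
def IsGeodesic (es : List X.E) (x y : X.V) : Prop :=
  X.IsWalk es x y ∧ (es.length : ℕ∞) = X.dist x y

/-- `∠_c(x1,x2) > θ` : there are edges `e1, e2` with `t e1 = o e2 = c`, each
lying on a geodesic between `c` and `x_i`, making an angle `> θ` at `c`. -/
def AngleGT (c x1 x2 : X.V) (θ : ℕ∞) : Prop :=
  ∃ (e1 e2 : X.E) (es1 es2 : List X.E), X.t e1 = c ∧ X.o e2 = c ∧
    X.IsGeodesic (X.rev e1 :: es1) c x1 ∧ X.IsGeodesic (e2 :: es2) c x2 ∧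
    θ < X.angle e1 e2

/-- All pairs of consecutive edges of a walk make an angle at most `θ`. -/
def AngleBounded (θ : ℕ∞) : List X.E → Prop
  | [] => True
  | [_] => True
  | e :: e' :: es => X.angle e e' ≤ θ ∧ AngleBounded θ (e' :: es)

/-- `v` is a vertex of the cone of parameter `θ` around the oriented edge `e`:
it lies on a path starting at `o e` by the edge `e`, of length at most `θ`,
whose consecutive edges make angles at most `θ`. -/
def InConeV (θ : ℕ∞) (e : X.E) (v : X.V) : Prop :=
  ∃ (es : List X.E) (y : X.V), X.IsWalk (e :: es) (X.o e) y ∧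
    ((e :: es).length : ℕ∞) ≤ θ ∧ X.AngleBounded θ (e :: es) ∧
    v ∈ X.walkVerts (X.o e) (e :: es)

/-- `ε` is an edge of the cone of parameter `θ` around the oriented edge `e`. -/
def InConeE (θ : ℕ∞) (e ε : X.E) : Prop :=
  ∃ (es : List X.E) (y : X.V), X.IsWalk (e :: es) (X.o e) y ∧
    ((e :: es).length : ℕ∞) ≤ θ ∧ X.AngleBounded θ (e :: es) ∧
    (ε ∈ e :: es ∨ X.rev ε ∈ e :: es)

/-- A graph is fine if for each edge `e` and each `L`, only finitely many
edges arrive at `o e` making an angle at most `L` with `e`. -/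
def Fine : Prop :=
  ∀ (e : X.E) (L : ℕ), {e' : X.E | X.t e' = X.o e ∧ X.angle e' e ≤ (L : ℕ∞)}.Finite

/-- δ-hyperbolicity: geodesic triangles are δ-thin. -/
def Hyperbolic (δ : ℕ) : Prop :=
  ∀ (a b c : X.V) (p q r : List X.E),
    X.IsGeodesic p a b → X.IsGeodesic q b c → X.IsGeodesic r a c →
    ∀ v ∈ X.walkVerts a p, ∃ w, (w ∈ X.walkVerts b q ∨ w ∈ X.walkVerts a r) ∧
      X.dist v w ≤ (δ : ℕ∞)

/-- The four point inequality form of δ-hyperbolicity. -/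
def FourPoint (δ : ℕ) : Prop :=
  ∀ a x y y' : X.V,
    X.dist a x + X.dist y y' ≤
      max (X.dist a y + X.dist y' x) (X.dist a y' + X.dist y x) + (δ : ℕ∞)

/-- Connectedness. -/
def Connected : Prop := ∀ x y : X.V, ∃ es, X.IsWalk es x y

/-- `t` is on an `α`-geodesic between `x` and `a`. -/
def OnAlphaGeod (α : ℕ∞) (t x a : X.V) : Prop :=
  X.dist x t + X.dist t a ≤ X.dist x a + α

/-- The set `𝓔_{a,x}(ρ)` of edges at distance `ρ` from `a` lying on
geodesics between `a` and `x`. -/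
def GeodEdgeAt (a x : X.V) (ρ : ℕ∞) (e : X.E) : Prop :=
  X.dist a (X.o e) = ρ ∧ ∃ es, (X.IsGeodesic es a x ∨ X.IsGeodesic es x a) ∧ e ∈ es

/-- The set `U_α[a,x]` of points on `α`-conical-geodesics between `x` and `a`. -/
def ConicalSet (α : ℕ) (a x : X.V) : Set X.V :=
  {t | X.OnAlphaGeod (α : ℕ∞) t x a ∧ X.dist a t ≤ X.dist a x ∧
       ∀ e, X.GeodEdgeAt a x (X.dist a t) e → X.InConeV ((40 * α : ℕ) : ℕ∞) e t}

end MGraph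

/-!
Let `p = [c, a]` and `q = [c, b]` be the geodesics carrying the edges of the angle at `c`, and
suppose a geodesic `g = [a, b]` misses `c`. Take `x ∈ p` and `y ∈ q` at distance `2δ` from `c`
(or `x = a`, `y = b` if a side is shorter). By thinness, `x` is `δ`-close to a point `w` of
`g ∪ q` and `y` to a point `w'` of `g ∪ p`. A geodesic jump of length `≤ δ < d(x, c)` misses `c`;
pieces of `g` miss `c` by assumption, and pieces of `p`, `q` away from their start miss `c`
because they are geodesics from `c`. As `w, w'` lie within `3δ` of `c`, this joins the
neighbours of `c` on `p` and `q` by a path avoiding `c` of length at most `2δ + 8δ + 2δ`,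
contradicting the angle bound.
-/

namespace MGraph

variable {X : MGraph} {es fs : List X.E} {c x y z u v : X.V}

theorem self_mem_walkVerts (x : X.V) (es : List X.E) : x ∈ X.walkVerts x es := by
  cases es <;> simp [walkVerts]

theorem IsWalk.end_mem_walkVerts (h : X.IsWalk es x y) : y ∈ X.walkVerts x es := by
  induction es generalizing x with
  | nil => obtain rfl : x = y := h; simp [walkVerts]
  | cons e es ih => exact List.mem_cons_of_mem _ (ih h.2)

theorem IsWalk.append (h₁ : X.IsWalk es x y) (h₂ : X.IsWalk fs y z) :
    X.IsWalk (es ++ fs) x z := by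
  induction es generalizing x with
  | nil => obtain rfl : x = y := h₁; simpa using h₂
  | cons e es ih => exact ⟨h₁.1, ih h₁.2⟩

theorem mem_walkVerts_append (h : X.IsWalk es x y) :
    v ∈ X.walkVerts x (es ++ fs) ↔ v ∈ X.walkVerts x es ∨ v ∈ X.walkVerts y fs := by
  induction es generalizing x with
  | nil =>
    obtain rfl : x = y := h
    simp only [List.nil_append, walkVerts, List.mem_singleton]
    exact ⟨Or.inr, fun h => h.elim (fun h => h ▸ self_mem_walkVerts x fs) id⟩
  | cons e es ih =>
    simp only [List.cons_append, walkVerts, List.mem_cons, ih h.2, or_assoc]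

theorem IsWalk.exists_append_of_mem (h : X.IsWalk es x y) (hv : v ∈ X.walkVerts x es) :
    ∃ es₁ es₂, es = es₁ ++ es₂ ∧ X.IsWalk es₁ x v ∧ X.IsWalk es₂ v y := by
  induction es generalizing x with
  | nil =>
    obtain rfl : x = y := h
    obtain rfl : v = x := by simpa [walkVerts] using hv
    exact ⟨[], [], rfl, rfl, rfl⟩
  | cons e es ih =>
    rcases List.mem_cons.mp hv with rfl | hv
    · exact ⟨[], e :: es, rfl, rfl, h⟩
    · obtain ⟨es₁, es₂, rfl, h₁, h₂⟩ := ih h.2 hv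
      exact ⟨e :: es₁, es₂, rfl, ⟨h.1, h₁⟩, h₂⟩

theorem IsWalk.take_drop (h : X.IsWalk es x y) (n : ℕ) :
    ∃ v, X.IsWalk (es.take n) x v ∧ X.IsWalk (es.drop n) v y := by
  induction es generalizing x n with
  | nil => exact ⟨x, by simp only [List.take_nil]; rfl, by simpa using h⟩
  | cons e es ih =>
    cases n with
    | zero => exact ⟨x, rfl, h⟩
    | succ n =>
      obtain ⟨v, h₁, h₂⟩ := ih h.2 n
      exact ⟨v, ⟨h.1, h₁⟩, h₂⟩

def revWalk (es : List X.E) : List X.E := (es.map X.rev).reverse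

@[simp] theorem length_revWalk (es : List X.E) : (revWalk es).length = es.length := by
  simp [revWalk]

theorem revWalk_cons (e : X.E) (es : List X.E) :
    revWalk (e :: es) = revWalk es ++ [X.rev e] := by
  simp [revWalk]

theorem IsWalk.revWalk (h : X.IsWalk es x y) : X.IsWalk (revWalk es) y x := by
  induction es generalizing x with
  | nil => exact h.symm
  | cons e es ih =>
    rw [revWalk_cons]
    exact (ih h.2).append ⟨X.rev_o e, (X.rev_t e).trans h.1⟩

theorem mem_walkVerts_revWalk (h : X.IsWalk es x y) :
    v ∈ X.walkVerts y (revWalk es) ↔ v ∈ X.walkVerts x es := by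
  induction es generalizing x with
  | nil => obtain rfl : x = y := h; simp [revWalk]
  | cons e es ih =>
    rw [revWalk_cons, mem_walkVerts_append h.2.revWalk, ih h.2]
    simp only [walkVerts, X.rev_t, h.1, List.mem_cons, List.not_mem_nil, or_false]
    constructor
    · rintro (hv | rfl | rfl)
      exacts [Or.inr hv, Or.inr (self_mem_walkVerts _ _), Or.inl rfl]
    · rintro (rfl | hv)
      exacts [Or.inr (Or.inr rfl), Or.inl hv]

theorem exists_isWalk_length_eq_of_sInf_ne_top {S : List X.E → Prop}
    (h : sInf {n : ℕ∞ | ∃ es, S es ∧ (es.length : ℕ∞) = n} ≠ ⊤) :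
    ∃ es, S es ∧ (es.length : ℕ∞) = sInf {n : ℕ∞ | ∃ es, S es ∧ (es.length : ℕ∞) = n} := by
  have hne : {n : ℕ∞ | ∃ es, S es ∧ (es.length : ℕ∞) = n}.Nonempty := by
    by_contra hne
    rw [Set.not_nonempty_iff_eq_empty.mp hne, sInf_empty] at h
    exact h rfl
  exact csInf_mem hne

section dist

theorem dist_le_length (h : X.IsWalk es x y) : X.dist x y ≤ es.length :=
  sInf_le ⟨es, h, rfl⟩

theorem exists_isWalk_length_eq_dist (h : X.dist x y ≠ ⊤) :
    ∃ es, X.IsWalk es x y ∧ (es.length : ℕ∞) = X.dist x y :=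
  exists_isWalk_length_eq_of_sInf_ne_top h

theorem dist_self (x : X.V) : X.dist x x = 0 :=
  nonpos_iff_eq_zero.mp (dist_le_length (es := []) rfl)

theorem dist_comm (x y : X.V) : X.dist x y = X.dist y x := by
  suffices ∀ x y : X.V, X.dist y x ≤ X.dist x y from le_antisymm (this y x) (this x y)
  intro x y
  exact le_sInf fun n ⟨es, h, hn⟩ => hn ▸ (length_revWalk es ▸ dist_le_length h.revWalk)

theorem dist_triangle (x y z : X.V) : X.dist x z ≤ X.dist x y + X.dist y z := by
  rcases eq_or_ne (X.dist x y) ⊤ with h₁ | h₁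
  · simp [h₁]
  rcases eq_or_ne (X.dist y z) ⊤ with h₂ | h₂
  · simp [h₂]
  obtain ⟨es, hes, hes'⟩ := exists_isWalk_length_eq_dist h₁
  obtain ⟨fs, hfs, hfs'⟩ := exists_isWalk_length_eq_dist h₂
  rw [← hes', ← hfs', ← Nat.cast_add, ← List.length_append]
  exact dist_le_length (hes.append hfs)

theorem IsWalk.dist_add_dist_le_length (h : X.IsWalk es x y) (hc : c ∈ X.walkVerts x es) :
    X.dist x c + X.dist c y ≤ es.length := by
  obtain ⟨es₁, es₂, rfl, h₁, h₂⟩ := h.exists_append_of_mem hc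
  rw [List.length_append, Nat.cast_add]
  exact add_le_add (dist_le_length h₁) (dist_le_length h₂)

end dist

section delDist

theorem delDist_le_length (h : X.IsWalk es x y) (hc : c ∉ X.walkVerts x es) :
    X.delDist c x y ≤ es.length :=
  sInf_le ⟨es, h, hc, rfl⟩

theorem exists_isWalk_length_eq_delDist (h : X.delDist c x y ≠ ⊤) :
    ∃ es, (X.IsWalk es x y ∧ c ∉ X.walkVerts x es) ∧
      (es.length : ℕ∞) = X.delDist c x y := by
  simpa only [delDist, and_assoc] using exists_isWalk_length_eq_of_sInf_ne_top
    (S := fun es => X.IsWalk es x y ∧ c ∉ X.walkVerts x es) (by simpa [delDist, and_assoc] using h)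

theorem delDist_comm (c x y : X.V) : X.delDist c x y = X.delDist c y x := by
  suffices ∀ x y : X.V, X.delDist c y x ≤ X.delDist c x y from le_antisymm (this y x) (this x y)
  intro x y
  exact le_sInf fun n ⟨es, h, hc, hn⟩ => hn ▸ (length_revWalk es ▸
    delDist_le_length h.revWalk (by rwa [mem_walkVerts_revWalk h]))

theorem delDist_triangle (c x y z : X.V) :
    X.delDist c x z ≤ X.delDist c x y + X.delDist c y z := by
  rcases eq_or_ne (X.delDist c x y) ⊤ with h₁ | h₁
  · simp [h₁]
  rcases eq_or_ne (X.delDist c y z) ⊤ with h₂ | h₂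
  · simp [h₂]
  obtain ⟨es, ⟨hes, hc⟩, hes'⟩ := exists_isWalk_length_eq_delDist h₁
  obtain ⟨fs, ⟨hfs, hc'⟩, hfs'⟩ := exists_isWalk_length_eq_delDist h₂
  rw [← hes', ← hfs', ← Nat.cast_add, ← List.length_append]
  exact delDist_le_length (hes.append hfs) fun hm => ((mem_walkVerts_append hes).mp hm).elim hc hc'

/-- A shortest walk from `x` to `y` cannot pass through `c` when `c` is off every geodesic. -/
theorem delDist_le_dist_of_lt (h : X.dist x y < X.dist x c + X.dist c y) :
    X.delDist c x y ≤ X.dist x y := by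
  rcases eq_or_ne (X.dist x y) ⊤ with hxy | hxy
  · exact hxy ▸ le_top
  obtain ⟨es, hes, hl⟩ := exists_isWalk_length_eq_dist hxy
  refine hl ▸ delDist_le_length hes fun hc => ?_
  exact (hl ▸ h).not_ge (hes.dist_add_dist_le_length hc)

end delDist

section IsGeodesic

theorem IsGeodesic.split {es₁ es₂ : List X.E} (h : X.IsGeodesic (es₁ ++ es₂) x z)
    (h₁ : X.IsWalk es₁ x y) (h₂ : X.IsWalk es₂ y z) :
    X.IsGeodesic es₁ x y ∧ X.IsGeodesic es₂ y z := by
  have hd₁ := dist_le_length h₁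
  have hd₂ := dist_le_length h₂
  have hsum : ((es₁.length + es₂.length : ℕ) : ℕ∞) ≤ X.dist x y + X.dist y z := by
    rw [← List.length_append, h.2]
    exact dist_triangle x y z
  obtain ⟨d₁, hd₁'⟩ := ENat.ne_top_iff_exists.mp (ne_top_of_le_ne_top (by simp) hd₁)
  obtain ⟨d₂, hd₂'⟩ := ENat.ne_top_iff_exists.mp (ne_top_of_le_ne_top (by simp) hd₂)
  rw [← hd₁'] at hd₁ hsum
  rw [← hd₂'] at hd₂ hsum
  norm_cast at hd₁ hd₂ hsum
  exact ⟨⟨h₁, by rw [← hd₁']; norm_cast; omega⟩, ⟨h₂, by rw [← hd₂']; norm_cast; omega⟩⟩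

theorem IsGeodesic.revWalk (h : X.IsGeodesic es x y) : X.IsGeodesic (revWalk es) y x :=
  ⟨h.1.revWalk, by rw [length_revWalk, h.2, dist_comm]⟩

theorem IsGeodesic.tail {e : X.E} (h : X.IsGeodesic (e :: es) x y) : X.IsGeodesic es (X.t e) y :=
  (IsGeodesic.split (es₁ := [e]) h ⟨h.1.1, rfl⟩ h.1.2).2

theorem IsGeodesic.not_mem_walkVerts_tail {e : X.E} (h : X.IsGeodesic (e :: es) x y) :
    x ∉ X.walkVerts (X.t e) es := by
  intro hx
  obtain ⟨es₁, es₂, rfl, -, h₂⟩ := h.1.2.exists_append_of_mem hx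
  have : (((e :: (es₁ ++ es₂)).length : ℕ) : ℕ∞) ≤ es₂.length := h.2 ▸ dist_le_length h₂
  norm_cast at this
  simp only [List.length_cons, List.length_append] at this
  omega

theorem IsGeodesic.dist_eq_dist_tail_add_one {e : X.E} (h : X.IsGeodesic (e :: es) x y)
    (hv : v ∈ X.walkVerts (X.t e) es) : X.dist x v = X.dist (X.t e) v + 1 := by
  obtain ⟨es₁, es₂, rfl, h₁, h₂⟩ := h.1.2.exists_append_of_mem hv
  have hv' := (IsGeodesic.split (es₁ := e :: es₁) h ⟨h.1.1, h₁⟩ h₂).1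
  rw [← hv'.2, ← hv'.tail.2]
  simp

theorem IsGeodesic.exists_mem_dist_eq_min (h : X.IsGeodesic es x y) (n : ℕ) :
    ∃ v ∈ X.walkVerts x es, X.dist x v = min n es.length ∧ (es.length ≤ n → v = y) := by
  obtain ⟨v, h₁, h₂⟩ := h.1.take_drop n
  rw [← List.take_append_drop n es] at h
  refine ⟨v, ?_, ?_, fun hn => ?_⟩
  · rw [← List.take_append_drop n es, mem_walkVerts_append h₁]
    exact Or.inl h₁.end_mem_walkVerts
  · rw [← (h.split h₁ h₂).1.2, List.length_take]
  · rwa [List.drop_eq_nil_of_le hn] at h₂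

theorem IsGeodesic.delDist_le_dist (h : X.IsGeodesic es x y) (hc : c ∉ X.walkVerts x es)
    (hu : u ∈ X.walkVerts x es) (hv : v ∈ X.walkVerts x es) : X.delDist c u v ≤ X.dist u v := by
  obtain ⟨A, B, rfl, hA, hB⟩ := h.1.exists_append_of_mem hu
  obtain ⟨hgA, hgB⟩ := h.split hA hB
  rcases (mem_walkVerts_append hA).mp hv with hvA | hvB
  · obtain ⟨A₁, A₂, rfl, hA₁, hA₂⟩ := hA.exists_append_of_mem hvA
    rw [delDist_comm, dist_comm, ← (hgA.split hA₁ hA₂).2.2]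
    refine delDist_le_length hA₂ fun hcA₂ => hc ?_
    exact (mem_walkVerts_append hA).mpr (Or.inl ((mem_walkVerts_append hA₁).mpr (Or.inr hcA₂)))
  · obtain ⟨B₁, B₂, rfl, hB₁, hB₂⟩ := hB.exists_append_of_mem hvB
    rw [← (hgB.split hB₁ hB₂).1.2]
    refine delDist_le_length hB₁ fun hcB₁ => hc ?_
    exact (mem_walkVerts_append hA).mpr (Or.inr ((mem_walkVerts_append hB₁).mpr (Or.inl hcB₁)))

theorem IsGeodesic.delDist_le_dist_of_ne (h : X.IsGeodesic es x y)
    (hu : u ∈ X.walkVerts x es) (hv : v ∈ X.walkVerts x es) (hux : u ≠ x) (hvx : v ≠ x) :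
    X.delDist x u v ≤ X.dist u v := by
  cases es with
  | nil => exact absurd (by simpa [walkVerts] using hu) hux
  | cons e es =>
    simp only [walkVerts, List.mem_cons] at hu hv
    exact h.tail.delDist_le_dist h.not_mem_walkVerts_tail (hu.resolve_left hux)
      (hv.resolve_left hvx)

theorem IsGeodesic.exists_mem_near_start {f : X.E} {P : List X.E} {a : X.V}
    (h : X.IsGeodesic (f :: P) c a) {n : ℕ} (hn : 0 < n) :
    ∃ x ∈ X.walkVerts c (f :: P), x ≠ c ∧ (x = a ∨ X.dist c x = n) ∧ X.dist c x ≤ n ∧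
      X.delDist c (X.t f) x ≤ n := by
  obtain ⟨x, hx, hcx, hxa⟩ := h.exists_mem_dist_eq_min n
  have hxc : x ≠ c := by
    rintro rfl
    rw [dist_self] at hcx
    have : min n (f :: P).length = 0 := by exact_mod_cast hcx.symm
    rw [List.length_cons] at this
    omega
  have hxP : x ∈ X.walkVerts (X.t f) P := by simpa [walkVerts, hxc] using hx
  have hcx_le : X.dist c x ≤ n := hcx ▸ by exact_mod_cast min_le_left _ _
  refine ⟨x, hx, hxc, ?_, hcx_le, ?_⟩
  · rcases le_total (f :: P).length n with hle | hle
    · exact Or.inl (hxa hle)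
    · exact Or.inr (by rw [hcx, min_eq_left hle])
  · calc X.delDist c (X.t f) x ≤ X.dist (X.t f) x :=
          h.tail.delDist_le_dist h.not_mem_walkVerts_tail (self_mem_walkVerts _ _) hxP
      _ ≤ X.dist c x := h.dist_eq_dist_tail_add_one hxP ▸ le_self_add
      _ ≤ n := hcx_le

end IsGeodesic

section Hyperbolic

variable {δ : ℕ} {p g q : List X.E} {a b : X.V}

/-- The jump from `x` to `w` is along a geodesic, and `c` is too far from `x` to lie on it. -/
theorem Hyperbolic.exists_near (hδ : X.Hyperbolic δ) (hδpos : 0 < δ)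
    (hp : X.IsGeodesic p c a) (hg : X.IsGeodesic g a b) (hq : X.IsGeodesic q c b)
    (hc : c ∉ X.walkVerts a g) (hx : x ∈ X.walkVerts c p) (hxa : x = a ∨ X.dist c x = 2 * δ) :
    ∃ w, (w ∈ X.walkVerts a g ∨ w ∈ X.walkVerts c q) ∧ w ≠ c ∧ X.delDist c x w ≤ δ ∧
      X.dist c w ≤ X.dist c x + δ := by
  rcases hxa with rfl | hcx
  · have hxc : x ≠ c := fun h => hc (h ▸ self_mem_walkVerts x g)
    refine ⟨x, Or.inl (self_mem_walkVerts x g), hxc, ?_, le_self_add⟩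
    exact (delDist_le_length (es := []) rfl (by simpa [walkVerts] using hxc.symm)).trans
      (by simp)
  obtain ⟨w, hw, hxw⟩ := hδ c a b p g q hp hg hq x hx
  have hδxc : (δ : ℕ∞) < X.dist x c := by
    rw [dist_comm, hcx]
    exact_mod_cast (by omega : δ < 2 * δ)
  have hwc : w ≠ c := by
    rintro rfl
    exact hxw.not_gt hδxc
  refine ⟨w, hw, hwc, ?_, (dist_triangle c x w).trans (add_le_add le_rfl hxw)⟩
  exact (delDist_le_dist_of_lt ((hxw.trans_lt hδxc).trans_le le_self_add)).trans hxw

theorem Hyperbolic.delDist_le_eight_mul (hδ : X.Hyperbolic δ) (hδpos : 0 < δ)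
    (hp : X.IsGeodesic p c a) (hg : X.IsGeodesic g a b) (hq : X.IsGeodesic q c b)
    (hc : c ∉ X.walkVerts a g)
    (hx : x ∈ X.walkVerts c p) (hxc : x ≠ c) (hxa : x = a ∨ X.dist c x = 2 * δ)
    (hcx : X.dist c x ≤ 2 * δ)
    (hy : y ∈ X.walkVerts c q) (hyc : y ≠ c) (hyb : y = b ∨ X.dist c y = 2 * δ)
    (hcy : X.dist c y ≤ 2 * δ) :
    X.delDist c x y ≤ 8 * δ := by
  have hc' : c ∉ X.walkVerts b (revWalk g) := by rwa [mem_walkVerts_revWalk hg.1]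
  obtain ⟨w, hw, hwc, hxw, hcw⟩ := hδ.exists_near hδpos hp hg hq hc hx hxa
  obtain ⟨w', hw', hw'c, hyw', hcw'⟩ := hδ.exists_near hδpos hq hg.revWalk hp hc' hy hyb
  rw [delDist_comm] at hyw'
  replace hcw : X.dist w c ≤ 3 * δ := calc
    X.dist w c = X.dist c w := dist_comm w c
    _ ≤ 2 * δ + δ := hcw.trans (add_le_add_left hcx _)
    _ = 3 * δ := by ring
  replace hcw' : X.dist c w' ≤ 3 * δ := calc
    X.dist c w' ≤ 2 * δ + δ := hcw'.trans (add_le_add_left hcy _)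
    _ = 3 * δ := by ring
  rcases hw with hw | hw
  · rcases hw' with hw' | hw'
    · rw [mem_walkVerts_revWalk hg.1] at hw'
      calc X.delDist c x y ≤ X.delDist c x w + X.delDist c w w' + X.delDist c w' y :=
            (delDist_triangle c x w' y).trans (add_le_add_left (delDist_triangle c x w w') _)
        _ ≤ δ + (X.dist w c + X.dist c w') + δ :=
            add_le_add (add_le_add hxw
              ((hg.delDist_le_dist hc hw hw').trans (dist_triangle w c w'))) hyw'
        _ ≤ δ + (3 * δ + 3 * δ) + δ := by gcongr
        _ = 8 * δ := by ring
    · calc X.delDist c x y ≤ X.delDist c x w' + X.delDist c w' y := delDist_triangle c x w' y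
        _ ≤ (X.dist x c + X.dist c w') + δ :=
            add_le_add ((hp.delDist_le_dist_of_ne hx hw' hxc hw'c).trans
              (dist_triangle x c w')) hyw'
        _ ≤ (2 * δ + 3 * δ) + δ := by rw [dist_comm]; gcongr
        _ ≤ 8 * δ := by ring_nf; gcongr; norm_num
  · calc X.delDist c x y ≤ X.delDist c x w + X.delDist c w y := delDist_triangle c x w y
      _ ≤ δ + (X.dist w c + X.dist c y) :=
          add_le_add hxw ((hq.delDist_le_dist_of_ne hw hy hwc hyc).trans (dist_triangle w c y))
      _ ≤ δ + (3 * δ + 2 * δ) := by gcongr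
      _ ≤ 8 * δ := by ring_nf; gcongr; norm_num

end Hyperbolic

end MGraph

open MGraph in
/-- in a δ-hyperbolic graph, if the angle at `c` between `a` and
`b` is greater than `12δ`, then every geodesic from `a` to `b` passes through `c`. -/
theorem stmt_1 (X : MGraph) (δ : ℕ) (hδpos : 0 < δ) (hδ : X.Hyperbolic δ)
    (a b c : X.V) (h : X.AngleGT c a b ((12 * δ : ℕ) : ℕ∞)) :
    ∀ es : List X.E, X.IsGeodesic es a b → c ∈ X.walkVerts a es := by
  intro g hg
  by_contra hc
  obtain ⟨e1, e2, P, Q, he1, -, hp, hq, hangle⟩ := h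
  obtain ⟨x, hx, hxc, hxa, hcx, hx'⟩ := hp.exists_mem_near_start (n := 2 * δ) (by omega)
  obtain ⟨y, hy, hyc, hyb, hcy, hy'⟩ := hq.exists_mem_near_start (n := 2 * δ) (by omega)
  push_cast at hxa hcx hx' hyb hcy hy'
  rw [X.rev_t] at hx'
  rw [delDist_comm] at hy'
  have hxy := hδ.delDist_le_eight_mul hδpos hp hg hq hc hx hxc hxa hcx hy hyc hyb hcy
  refine hangle.not_ge ?_
  calc X.angle e1 e2 = X.delDist c (X.o e1) (X.t e2) := by rw [angle, he1]
    _ ≤ X.delDist c (X.o e1) x + X.delDist c x y + X.delDist c y (X.t e2) :=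
        (delDist_triangle c _ y _).trans (add_le_add_left (delDist_triangle c _ x y) _)
    _ ≤ 2 * δ + 8 * δ + 2 * δ := add_le_add (add_le_add hx' hxy) hy'
    _ = ((12 * δ : ℕ) : ℕ∞) := by push_cast; ring
end

section
/- In any graph X, for any oriented edge e and any θ ≥ 0, if a vertex v lies in the cone of parameter θ around e, then for every vertex c at distance at most θ/10 from both v and e, the angle at c between o(e) and v is at most (θ² + 3θ)/2. -/
namespace MGraphAux

variable (X : MGraph)

def walkEnd (x : X.V) : List X.E → X.V
  | [] => x
  | e :: es => walkEnd (X.t e) es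

variable {X}

lemma isWalk_end {es : List X.E} {x y : X.V} (h : X.IsWalk es x y) :
    walkEnd X x es = y := by
  induction es generalizing x with
  | nil => exact h
  | cons e es ih => exact ih h.2

lemma isWalk_append {es1 es2 : List X.E} {x y z : X.V}
    (h1 : X.IsWalk es1 x y) (h2 : X.IsWalk es2 y z) :
    X.IsWalk (es1 ++ es2) x z := by
  induction es1 generalizing x with
  | nil => cases h1; simpa using h2
  | cons e es ih => exact ⟨h1.1, ih h1.2⟩

lemma mem_walkVerts_head (x : X.V) (es : List X.E) : x ∈ X.walkVerts x es := by
  cases es <;> simp [MGraph.walkVerts]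

lemma walkVerts_concat (x : X.V) (as : List X.E) (f : X.E) :
    X.walkVerts x (as ++ [f]) = X.walkVerts x as ++ [X.t f] := by
  induction as generalizing x with
  | nil => simp [MGraph.walkVerts]
  | cons a as ih => simp [MGraph.walkVerts, ih]

lemma mem_walkVerts_append {z x y : X.V} {as bs : List X.E}
    (hw : X.IsWalk as x y) (hz : z ∈ X.walkVerts x (as ++ bs)) :
    z ∈ X.walkVerts x as ∨ z ∈ X.walkVerts y bs := by
  induction as generalizing x with
  | nil => cases hw; exact Or.inr (by simpa using hz)
  | cons a as ih =>
    simp only [List.cons_append, MGraph.walkVerts, List.mem_cons] at hz ⊢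
    rcases hz with rfl | hz
    · exact Or.inl (Or.inl rfl)
    · rcases ih hw.2 hz with h | h
      · exact Or.inl (Or.inr h)
      · exact Or.inr h

lemma exists_suffix_walk {es : List X.E} {x y z : X.V}
    (hw : X.IsWalk es x y) (hz : z ∈ X.walkVerts x es) :
    ∃ es', X.IsWalk es' z y ∧ es'.length ≤ es.length := by
  induction es generalizing x with
  | nil =>
    simp [MGraph.walkVerts] at hz
    subst hz; exact ⟨[], hw, le_rfl⟩
  | cons e es ih =>
    simp only [MGraph.walkVerts, List.mem_cons] at hz
    rcases hz with rfl | hz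
    · exact ⟨e :: es, hw, le_rfl⟩
    · obtain ⟨es', h1, h2⟩ := ih hw.2 hz
      exact ⟨es', h1, h2.trans (by simp)⟩

lemma dist_le_length {es : List X.E} {x y : X.V} (h : X.IsWalk es x y) :
    X.dist x y ≤ (es.length : ℕ∞) :=
  sInf_le ⟨es, h, rfl⟩

lemma delDist_le_length {c x y : X.V} {es : List X.E} (h : X.IsWalk es x y)
    (hc : c ∉ X.walkVerts x es) :
    X.delDist c x y ≤ (es.length : ℕ∞) :=
  sInf_le ⟨es, h, hc, rfl⟩

lemma exists_le_of_sInf_le {S : Set ℕ∞} {n : ℕ} (h : sInf S ≤ (n : ℕ∞)) :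
    ∃ m ∈ S, m ≤ (n : ℕ∞) := by
  by_contra hc
  push_neg at hc
  have h1 : ((n + 1 : ℕ) : ℕ∞) ≤ sInf S := by
    refine le_sInf fun m hm => ?_
    have := hc m hm
    push_cast
    exact Order.add_one_le_of_lt this
  have h2 : ((n + 1 : ℕ) : ℕ∞) ≤ (n : ℕ∞) := h1.trans h
  have := Nat.cast_le.mp h2
  omega

lemma delDist_extract {c x y : X.V} {θ : ℕ} (h : X.delDist c x y ≤ (θ : ℕ∞)) :
    ∃ es, X.IsWalk es x y ∧ c ∉ X.walkVerts x es ∧ es.length ≤ θ := by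
  obtain ⟨m, ⟨es, hw, hc, hm⟩, hle⟩ := exists_le_of_sInf_le h
  exact ⟨es, hw, hc, Nat.cast_le.mp (hm ▸ hle)⟩

lemma delDist_self {x y : X.V} {θ : ℕ} (h : X.delDist x x y ≤ (θ : ℕ∞)) : False := by
  obtain ⟨es, _, hc, _⟩ := delDist_extract h
  exact hc (mem_walkVerts_head x es)

lemma geodesic_ne {e : X.E} {es : List X.E} {x y : X.V}
    (h : X.IsGeodesic (e :: es) x y) : x ≠ y := by
  rintro rfl
  have h1 : X.dist x x ≤ ((0 : ℕ) : ℕ∞) := dist_le_length (show X.IsWalk [] x x from rfl)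
  have h2 := h.2
  rw [← h2] at h1
  have := Nat.cast_le.mp h1
  simp at this

lemma geodesic_tail_avoid {e : X.E} {es : List X.E} {c y : X.V}
    (h : X.IsGeodesic (e :: es) c y) : c ∉ X.walkVerts (X.t e) es := by
  intro hmem
  obtain ⟨es', h1, h2⟩ := exists_suffix_walk h.1.2 hmem
  have h3 : X.dist c y ≤ (es'.length : ℕ∞) := dist_le_length h1
  rw [← h.2] at h3
  have h4 := Nat.cast_le.mp h3
  simp at h4
  omega

lemma angleBounded_tail {θ : ℕ∞} {e : X.E} {es : List X.E}
    (h : X.AngleBounded θ (e :: es)) : X.AngleBounded θ es := by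
  cases es with
  | nil => trivial
  | cons e' es => exact h.2

lemma angleBounded_prefix {θ : ℕ∞} {p es : List X.E}
    (hpre : p <+: es) (h : X.AngleBounded θ es) : X.AngleBounded θ p := by
  induction p generalizing es with
  | nil => trivial
  | cons a ps ih =>
    cases ps with
    | nil => trivial
    | cons b p' =>
      obtain ⟨t, rfl⟩ := hpre
      exact ⟨h.1, ih ⟨t, rfl⟩ h.2⟩

lemma exists_prefix_walk {es : List X.E} {x y v : X.V}
    (hw : X.IsWalk es x y) (hv : v ∈ X.walkVerts x es) :
    ∃ p, p <+: es ∧ X.IsWalk p x v := by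
  induction es generalizing x with
  | nil =>
    simp [MGraph.walkVerts] at hv
    exact ⟨[], List.nil_prefix, hv.symm⟩
  | cons e es ih =>
    simp only [MGraph.walkVerts, List.mem_cons] at hv
    rcases hv with rfl | hv
    · exact ⟨[], List.nil_prefix, rfl⟩
    · obtain ⟨p, ⟨t, rfl⟩, hpw⟩ := ih hw.2 hv
      exact ⟨e :: p, ⟨t, rfl⟩, hw.1, hpw⟩

def revWalk (X : MGraph) (es : List X.E) : List X.E := (es.map X.rev).reverse

@[simp] lemma revWalk_length (es : List X.E) : (revWalk X es).length = es.length := by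
  simp [revWalk]

lemma isWalk_revWalk {es : List X.E} {x y : X.V} (h : X.IsWalk es x y) :
    X.IsWalk (revWalk X es) y x := by
  induction es generalizing x with
  | nil => exact h.symm
  | cons e es ih =>
    have h1 : X.IsWalk [X.rev e] (X.t e) x :=
      ⟨X.rev_o e, by rw [X.rev_t]; exact h.1⟩
    have : revWalk X (e :: es) = revWalk X es ++ [X.rev e] := by simp [revWalk]
    rw [this]
    exact isWalk_append (ih h.2) h1

lemma walkVerts_revWalk {es : List X.E} {x y : X.V} (h : X.IsWalk es x y) :
    X.walkVerts y (revWalk X es) = (X.walkVerts x es).reverse := by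
  induction es generalizing x with
  | nil => cases h; simp [revWalk, MGraph.walkVerts]
  | cons e es ih =>
    have h1 : revWalk X (e :: es) = revWalk X es ++ [X.rev e] := by simp [revWalk]
    rw [h1, walkVerts_concat, ih h.2, X.rev_t, h.1]
    simp [MGraph.walkVerts]

end MGraphAux

namespace MGraphAux

variable {X : MGraph}

lemma detour (θ : ℕ) (c : X.V) :
    ∀ (n : ℕ) (p : List X.E) (a b : X.V), p.length ≤ n → X.IsWalk p a b →
      X.AngleBounded (θ : ℕ∞) p → a ≠ c → b ≠ c →
      ∃ q, X.IsWalk q a b ∧ c ∉ X.walkVerts a q ∧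
        q.length ≤ p.length + p.length / 2 * θ := by
  intro n
  induction n with
  | zero =>
    intro p a b hlen hw hab ha hb
    match p with
    | [] =>
      refine ⟨[], hw, ?_, by simp⟩
      simp [MGraph.walkVerts]
      exact fun h => ha h.symm
  | succ n ih =>
    intro p a b hlen hw hab ha hb
    match p with
    | [] =>
      refine ⟨[], hw, ?_, by simp⟩
      simp [MGraph.walkVerts]
      exact fun h => ha h.symm
    | f :: rest =>
      by_cases hfc : X.t f = c
      · match rest with
        | [] => exact absurd (hfc ▸ hw.2 : c = b) (fun h => hb h.symm)
        | f' :: rest' =>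
          have h1 : X.delDist c (X.o f) (X.t f') ≤ (θ : ℕ∞) := by
            have := hab.1
            unfold MGraph.angle at this
            rwa [hfc] at this
          obtain ⟨d, hdw, hdc, hdlen⟩ := delDist_extract h1
          have hwrest : X.IsWalk (f' :: rest') (X.t f) b := hw.2
          have hf'c : X.t f' ≠ c := by
            match rest' with
            | [] => exact fun h => hb ((h ▸ hwrest.2 : c = b).symm)
            | f'' :: rest'' =>
              intro h
              have h2 : X.angle f' f'' ≤ (θ : ℕ∞) := hab.2.1
              unfold MGraph.angle at h2
              have ho : X.o f' = X.t f' := by rw [hwrest.1, hfc, h]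
              rw [ho] at h2
              exact delDist_self h2
          obtain ⟨q', hq'w, hq'c, hq'len⟩ := ih rest' (X.t f') b
            (by simp at hlen ⊢; omega) hwrest.2
            (angleBounded_tail (angleBounded_tail hab)) hf'c hb
          refine ⟨d ++ q', ?_, ?_, ?_⟩
          · rw [← hw.1]; exact isWalk_append hdw hq'w
          · intro hmem
            rw [← hw.1] at hmem
            rcases mem_walkVerts_append hdw hmem with h | h
            · exact hdc h
            · exact hq'c h
          · simp only [List.length_append, List.length_cons]
            have heq : (rest'.length + 1 + 1) / 2 * θ = rest'.length / 2 * θ + θ := by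
              rw [show (rest'.length + 1 + 1) / 2 = rest'.length / 2 + 1 from by omega,
                add_mul, one_mul]
            rw [heq]
            generalize rest'.length / 2 * θ = D at hq'len ⊢
            omega
      · obtain ⟨q', hq'w, hq'c, hq'len⟩ := ih rest (X.t f) b
          (by simp at hlen ⊢; omega) hw.2 (angleBounded_tail hab) hfc hb
        refine ⟨f :: q', ⟨hw.1, hq'w⟩, ?_, ?_⟩
        · rw [← hw.1]
          simp only [MGraph.walkVerts, List.mem_cons]
          rw [hw.1]
          rintro (h | h)
          · exact ha h.symm
          · exact hq'c h
        · simp only [List.length_cons]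
          have hmono : rest.length / 2 * θ ≤ (rest.length + 1) / 2 * θ :=
            Nat.mul_le_mul_right θ (by omega)
          generalize rest.length / 2 * θ = D1 at hq'len hmono
          generalize (rest.length + 1) / 2 * θ = D2 at hmono ⊢
          omega

end MGraphAux

open MGraphAux

/-- if `v` lies in the cone of parameter `θ` around `e` then any
vertex `c` at distance at most `θ/10` from both `v` and `e` satisfies
`∠_c(o e, v) ≤ (θ² + 3θ)/2`. -/
theorem stmt_4 (X : MGraph) (θ : ℕ) (e : X.E) (v : X.V)
    (hv : X.InConeV (θ : ℕ∞) e v) (c : X.V)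
    (hcv : X.dist c v ≤ ((θ / 10 : ℕ) : ℕ∞))
    (hce : X.dist c (X.o e) ≤ ((θ / 10 : ℕ) : ℕ∞)) :
    ¬ X.AngleGT c (X.o e) v (((θ ^ 2 + 3 * θ) / 2 : ℕ) : ℕ∞) := by
  rintro ⟨e1, e2, es1, es2, hte1, hoe2, hg1, hg2, hang⟩
  obtain ⟨es, y, hwalk, hlen, hangb, hvmem⟩ := hv
  -- geodesic to o e
  have hd1 : X.dist c (X.o e) = ((es1.length + 1 : ℕ) : ℕ∞) := by
    rw [← hg1.2]; simp
  have ha1 : es1.length + 1 ≤ θ / 10 := by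
    rw [hd1] at hce; exact Nat.cast_le.mp hce
  have hwalk1 : X.IsWalk es1 (X.o e1) (X.o e) := by
    have := hg1.1.2; rwa [X.rev_t] at this
  have havoid1 : c ∉ X.walkVerts (X.o e1) es1 := by
    have := geodesic_tail_avoid hg1; rwa [X.rev_t] at this
  -- geodesic to v
  have hd2 : X.dist c v = ((es2.length + 1 : ℕ) : ℕ∞) := by
    rw [← hg2.2]; simp
  have ha2 : es2.length + 1 ≤ θ / 10 := by
    rw [hd2] at hcv; exact Nat.cast_le.mp hcv
  have hwalk2 : X.IsWalk es2 (X.t e2) v := hg2.1.2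
  have havoid2 : c ∉ X.walkVerts (X.t e2) es2 := geodesic_tail_avoid hg2
  have hne_oe : X.o e ≠ c := (geodesic_ne hg1).symm
  have hne_v : v ≠ c := (geodesic_ne hg2).symm
  -- truncate the cone path at v
  obtain ⟨p, hppre, hpw⟩ := exists_prefix_walk hwalk hvmem
  have hpang : X.AngleBounded (θ : ℕ∞) p := angleBounded_prefix hppre hangb
  have hplen : p.length ≤ θ := by
    have h1 : (e :: es).length ≤ θ := Nat.cast_le.mp hlen
    exact (hppre.length_le).trans h1
  -- detour around c
  obtain ⟨q, hqw, hqc, hqlen⟩ := detour θ c p.length p (X.o e) v le_rfl hpw hpang hne_oe hne_v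
  -- reversed geodesic tail from v to t e2
  have hrw : X.IsWalk (revWalk X es2) v (X.t e2) := isWalk_revWalk hwalk2
  have hrc : c ∉ X.walkVerts v (revWalk X es2) := by
    rw [walkVerts_revWalk hwalk2]; simpa using havoid2
  -- the full walk
  have hW : X.IsWalk (es1 ++ (q ++ revWalk X es2)) (X.o e1) (X.t e2) :=
    isWalk_append hwalk1 (isWalk_append hqw hrw)
  have hWc : c ∉ X.walkVerts (X.o e1) (es1 ++ (q ++ revWalk X es2)) := by
    intro hmem
    rcases mem_walkVerts_append hwalk1 hmem with h | h
    · exact havoid1 h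
    · rcases mem_walkVerts_append hqw h with h' | h'
      · exact hqc h'
      · exact hrc h'
  have hangle : X.angle e1 e2 ≤ ((es1 ++ (q ++ revWalk X es2)).length : ℕ∞) := by
    unfold MGraph.angle
    rw [hte1]
    exact delDist_le_length hW hWc
  have hlt : ((θ ^ 2 + 3 * θ) / 2 : ℕ) < (es1 ++ (q ++ revWalk X es2)).length :=
    Nat.cast_lt.mp (lt_of_lt_of_le hang hangle)
  have hWlen : (es1 ++ (q ++ revWalk X es2)).length = es1.length + q.length + es2.length := by
    simp; omega
  rw [hWlen] at hlt
  -- arithmetic contradiction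
  have hmono : p.length / 2 * θ ≤ θ / 2 * θ :=
    Nat.mul_le_mul_right θ (Nat.div_le_div_right hplen)
  have hhalf : 2 * (θ / 2 * θ) ≤ θ * θ := by
    have h2 : θ / 2 * 2 ≤ θ := Nat.div_mul_le_self θ 2
    calc 2 * (θ / 2 * θ) = θ / 2 * 2 * θ := by ring
      _ ≤ θ * θ := Nat.mul_le_mul_right θ h2
  rw [show θ ^ 2 = θ * θ from sq θ] at hlt
  generalize p.length / 2 * θ = D1 at hqlen hmono
  generalize θ / 2 * θ = D2 at hmono hhalf
  generalize θ * θ = T at hhalf hlt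
  omega
end

section
/- In a fine graph, every cone Co_θ(e) of finite parameter θ around an edge e is a finite set (finitely many vertices and edges). -/
namespace MGraph

variable (X : MGraph)

lemma isWalk_append' {l1 l2 : List X.E} {x y z : X.V}
    (h1 : X.IsWalk l1 x y) (h2 : X.IsWalk l2 y z) : X.IsWalk (l1 ++ l2) x z := by
  induction l1 generalizing x with
  | nil => exact (show x = y from h1) ▸ h2
  | cons e es ih => exact ⟨h1.1, ih h1.2⟩

lemma head_mem_walkVerts (x : X.V) (l : List X.E) : x ∈ X.walkVerts x l := by
  cases l <;> simp [walkVerts]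

lemma mem_walkVerts_append' {l1 l2 : List X.E} {x y a : X.V} (h : X.IsWalk l1 x y) :
    a ∈ X.walkVerts x (l1 ++ l2) ↔ a ∈ X.walkVerts x l1 ∨ a ∈ X.walkVerts y l2 := by
  induction l1 generalizing x with
  | nil =>
    have hxy : x = y := h
    subst hxy
    simp only [List.nil_append, walkVerts, List.mem_singleton]
    constructor
    · exact Or.inr
    · rintro (rfl | h)
      · exact X.head_mem_walkVerts _ l2
      · exact h
  | cons e es ih =>
    simp only [List.cons_append, walkVerts, List.mem_cons, List.append_eq]
    rw [ih h.2]
    tauto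

lemma isWalk_rev' {es : List X.E} {x y : X.V} (h : X.IsWalk es x y) :
    X.IsWalk (es.reverse.map X.rev) y x := by
  induction es generalizing x with
  | nil => exact (show x = y from h).symm
  | cons e es ih =>
    simp only [List.reverse_cons, List.map_append, List.map_cons, List.map_nil]
    exact X.isWalk_append' (ih h.2) ⟨X.rev_o e, show X.t (X.rev e) = x from (X.rev_t e).trans h.1⟩

lemma mem_walkVerts_rev' {es : List X.E} {x y a : X.V} (h : X.IsWalk es x y) :
    a ∈ X.walkVerts y (es.reverse.map X.rev) ↔ a ∈ X.walkVerts x es := by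
  induction es generalizing x with
  | nil =>
    have hxy : x = y := h
    subst hxy; rfl
  | cons e es ih =>
    obtain ⟨h1, h2⟩ := h
    subst h1
    simp only [List.reverse_cons, List.map_append, List.map_cons, List.map_nil,
      X.mem_walkVerts_append' (X.isWalk_rev' h2), ih h2]
    have := X.head_mem_walkVerts (X.t e) es
    simp only [walkVerts, X.rev_t, List.mem_cons, List.mem_singleton, List.not_mem_nil, or_false]
      at this ⊢
    constructor
    · rintro (h | rfl | rfl)
      · exact Or.inr h
      · exact Or.inr this
      · exact Or.inl rfl
    · rintro (rfl | h)
      · exact Or.inr (Or.inr rfl)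
      · exact Or.inl h

lemma delDist_symm (v x y : X.V) : X.delDist v x y = X.delDist v y x := by
  have key : ∀ x y : X.V,
      {n : ℕ∞ | ∃ es, X.IsWalk es x y ∧ v ∉ X.walkVerts x es ∧ (es.length : ℕ∞) = n} ⊆
      {n : ℕ∞ | ∃ es, X.IsWalk es y x ∧ v ∉ X.walkVerts y es ∧ (es.length : ℕ∞) = n} := by
    rintro x y n ⟨es, hw, hv, hl⟩
    exact ⟨es.reverse.map X.rev, X.isWalk_rev' hw,
      fun hm => hv ((X.mem_walkVerts_rev' hw).1 hm), by simpa using hl⟩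
  exact le_antisymm (sInf_le_sInf (key y x)) (sInf_le_sInf (key x y))

lemma angle_rev' (f e2 : X.E) (h : X.o e2 = X.t f) :
    X.angle (X.rev e2) (X.rev f) = X.angle f e2 := by
  unfold angle
  rw [X.rev_t, X.rev_o, X.rev_t, h, X.delDist_symm]

lemma next_finite (hfine : X.Fine) (θ : ℕ) (f : X.E) :
    {e2 : X.E | X.o e2 = X.t f ∧ X.angle f e2 ≤ (θ : ℕ∞)}.Finite := by
  have hinj : Function.Injective X.rev := fun a b hab => by
    rw [← X.rev_rev a, hab, X.rev_rev]
  refine ((hfine (X.rev f) θ).preimage hinj.injOn).subset ?_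
  rintro e2 ⟨h1, h2⟩
  exact ⟨by rw [X.rev_t, X.rev_o, h1], by rw [X.angle_rev' f e2 h1]; exact h2⟩

lemma walks_finite (hfine : X.Fine) (θ : ℕ) : ∀ (n : ℕ) (f : X.E),
    {es : List X.E | es.length ≤ n ∧ (∃ y, X.IsWalk es (X.t f) y) ∧
      X.AngleBounded (θ : ℕ∞) (f :: es)}.Finite := by
  intro n
  induction n with
  | zero =>
    intro f
    refine (Set.finite_singleton ([] : List X.E)).subset ?_
    rintro es ⟨hl, -⟩
    simpa using List.length_eq_zero_iff.mp (Nat.le_zero.mp hl)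
  | succ n ih =>
    intro f
    refine (Set.Finite.union (Set.finite_singleton ([] : List X.E))
      ((X.next_finite hfine θ f).biUnion (fun e2 _ => (ih e2).image (e2 :: ·)))).subset ?_
    rintro es ⟨hl, ⟨y, hw⟩, hab⟩
    cases es with
    | nil => exact Or.inl rfl
    | cons e2 es' =>
      obtain ⟨ho, hw'⟩ := hw
      obtain ⟨ha, hab'⟩ := hab
      exact Or.inr (Set.mem_biUnion (show e2 ∈ _ from ⟨ho, ha⟩)
        ⟨es', ⟨Nat.succ_le_succ_iff.mp (by simpa using hl), ⟨y, hw'⟩, hab'⟩, rfl⟩)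

end MGraph

/-- in a fine graph, every cone of finite parameter around an edge
is finite (finitely many vertices and finitely many edges). -/
theorem stmt_6 (X : MGraph) (hfine : X.Fine) (θ : ℕ) (e : X.E) :
    {v : X.V | X.InConeV (θ : ℕ∞) e v}.Finite ∧
    {ε : X.E | X.InConeE (θ : ℕ∞) e ε}.Finite := by
  have W := X.walks_finite hfine θ θ e
  constructor
  · refine (W.biUnion (fun es _ => (X.walkVerts (X.o e) (e :: es)).finite_toSet)).subset ?_
    rintro v ⟨es, y, hw, hlen, hab, hv⟩
    have hl : es.length ≤ θ := by
      have := (Nat.cast_le (α := ℕ∞)).mp hlen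
      simp only [List.length_cons] at this
      omega
    exact Set.mem_biUnion (show es ∈ _ from ⟨hl, ⟨y, hw.2⟩, hab⟩) hv
  · have hS : ∀ es : List X.E, {ε : X.E | ε ∈ (e :: es) ∨ X.rev ε ∈ (e :: es)}.Finite := by
      intro es
      refine ((e :: es).finite_toSet.union ((e :: es).finite_toSet.image X.rev)).subset ?_
      rintro ε (h | h)
      · exact Or.inl h
      · exact Or.inr ⟨_, h, X.rev_rev ε⟩
    refine (W.biUnion (fun es _ => hS es)).subset ?_
    rintro ε ⟨es, y, hw, hlen, hab, hm⟩
    have hl : es.length ≤ θ := by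
      have := (Nat.cast_le (α := ℕ∞)).mp hlen
      simp only [List.length_cons] at this
      omega
    exact Set.mem_biUnion (show es ∈ _ from ⟨hl, ⟨y, hw.2⟩, hab⟩) hm
end
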